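/- arXiv:2303.05320 — 4 statements merged into one kernel-verified Lean document; each statement's English description precedes it below -/
import Mathlib

section
/- For each fixed real number L > 1 there exists a constant c > 0 such that for all j ∈ ℤ and all s ∈ ℝ one has Σ_{k∈ℤ} √(log(3 + |j| + |k|)) / (3 + |2^j s − k|)^L ≤ c · √(log(3 + |j| + 2^j |s|)). -/
/-!
Put `x = 2 ^ j * s`, `A = 3 + |j| + |x|` and `B_k = 3 + |x - k|`. Since
`3 + |j| + |k| ≤ A + B_k ≤ A * B_k`, we get `√(log (3 + |j| + |k|)) ≤ √(log A) + log B_k`.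
The first part contributes `√(log A) * ∑ B_k ^ (-L)`, the second
`∑ log B_k / B_k ^ L ≤ ε⁻¹ * ∑ B_k ^ (-(L - ε))`. Comparing `B_k` with `2 + |k - ⌊x⌋|` bounds
both lattice sums independently of `x`, and `1 ≤ √(log A)` absorbs the constant term.
-/

open Real

lemma Real.sqrt_add_le_sqrt_add_sqrt {a b : ℝ} (ha : 0 ≤ a) (hb : 0 ≤ b) :
    √(a + b) ≤ √a + √b :=
  (sqrt_le_left (by positivity)).2 <| by
    nlinarith [sq_sqrt ha, sq_sqrt hb, mul_nonneg (sqrt_nonneg a) (sqrt_nonneg b)]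

lemma Real.log_add_le_log_add_log {a b : ℝ} (ha : 2 ≤ a) (hb : 2 ≤ b) :
    log (a + b) ≤ log a + log b := by
  rw [← log_mul (by positivity) (by positivity)]
  exact log_le_log (by positivity) (by nlinarith)

lemma Real.one_le_log_three_add {t : ℝ} (ht : 0 ≤ t) : 1 ≤ log (3 + t) :=
  (le_log_iff_exp_le (by positivity)).2 (by linarith [exp_one_lt_d9])

lemma Real.log_div_rpow_le {x ε L : ℝ} (hx : 0 < x) (hε : 0 < ε) :
    log x / x ^ L ≤ ε⁻¹ * (x ^ (L - ε))⁻¹ := by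
  calc log x / x ^ L ≤ x ^ ε / ε / x ^ L := by gcongr; exact log_le_rpow_div hx.le hε
    _ = ε⁻¹ * (x ^ (L - ε))⁻¹ := by rw [rpow_sub hx]; field_simp

lemma sqrt_log_three_add_abs_le {a : ℝ} (ha : 0 ≤ a) (x y : ℝ) :
    √(log (3 + a + |y|)) ≤ √(log (3 + a + |x|)) + log (3 + |x - y|) := by
  have hy : |y| ≤ |x| + |x - y| := by
    have := abs_sub_abs_le_abs_sub y x
    rw [abs_sub_comm] at this
    linarith
  have hlog : log (3 + a + |y|) ≤ log (3 + a + |x|) + log (3 + |x - y|) :=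
    (log_le_log (by positivity) (by linarith)).trans
      (log_add_le_log_add_log (by linarith [abs_nonneg x]) (by linarith [abs_nonneg (x - y)]))
  have hB := one_le_log_three_add (abs_nonneg (x - y))
  calc √(log (3 + a + |y|)) ≤ √(log (3 + a + |x|) + log (3 + |x - y|)) := sqrt_le_sqrt hlog
    _ ≤ √(log (3 + a + |x|)) + √(log (3 + |x - y|)) :=
      sqrt_add_le_sqrt_add_sqrt (log_nonneg (by linarith [abs_nonneg x])) (by linarith)
    _ ≤ √(log (3 + a + |x|)) + log (3 + |x - y|) := by
      gcongr
      exact sqrt_le_self_iff.2 (Or.inr hB)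

lemma sqrt_log_div_rpow_le {a ε L : ℝ} (ha : 0 ≤ a) (hε : 0 < ε) (x y : ℝ) :
    √(log (3 + a + |y|)) / (3 + |x - y|) ^ L ≤
      √(log (3 + a + |x|)) * ((3 + |x - y|) ^ L)⁻¹ +
        ε⁻¹ * ((3 + |x - y|) ^ (L - ε))⁻¹ := by
  calc √(log (3 + a + |y|)) / (3 + |x - y|) ^ L
      ≤ (√(log (3 + a + |x|)) + log (3 + |x - y|)) / (3 + |x - y|) ^ L := by
        gcongr; exact sqrt_log_three_add_abs_le ha x y
    _ = √(log (3 + a + |x|)) * ((3 + |x - y|) ^ L)⁻¹ +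
          log (3 + |x - y|) / (3 + |x - y|) ^ L := by
        ring
    _ ≤ _ := by gcongr; exact log_div_rpow_le (by positivity) hε

lemma summable_inv_two_add_abs_rpow {q : ℝ} (hq : 1 < q) :
    Summable fun k : ℤ => ((2 + |(k : ℝ)|) ^ q)⁻¹ := by
  have h := (summable_one_div_nat_add_rpow 2 q).2 hq
  refine .of_nat_of_neg ?_ ?_ <;> refine h.congr fun n => ?_ <;>
    simp [abs_of_nonneg (by positivity : (0 : ℝ) ≤ n + 2), add_comm]

lemma inv_three_add_abs_sub_rpow_le {q : ℝ} (hq : 0 ≤ q) (x : ℝ) (k : ℤ) :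
    ((3 + |x - k|) ^ q)⁻¹ ≤ ((2 + |((k - ⌊x⌋ : ℤ) : ℝ)|) ^ q)⁻¹ := by
  have hfloor : |x - ⌊x⌋| ≤ 1 := by
    rw [abs_le]; constructor <;> linarith [Int.floor_le x, Int.lt_floor_add_one x]
  have := abs_sub_le (k : ℝ) x ⌊x⌋
  rw [abs_sub_comm (k : ℝ) x] at this
  gcongr (?_ ^ _)⁻¹
  push_cast
  linarith

lemma summable_inv_three_add_abs_sub_rpow {q : ℝ} (hq : 1 < q) (x : ℝ) :
    Summable fun k : ℤ => ((3 + |x - k|) ^ q)⁻¹ :=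
  ((Equiv.subRight ⌊x⌋).summable_iff.2 (summable_inv_two_add_abs_rpow hq)).of_nonneg_of_le
    (fun _ => by positivity) (inv_three_add_abs_sub_rpow_le (by linarith) x)

lemma tsum_inv_three_add_abs_sub_rpow_le {q : ℝ} (hq : 1 < q) (x : ℝ) :
    ∑' k : ℤ, ((3 + |x - k|) ^ q)⁻¹ ≤ ∑' k : ℤ, ((2 + |(k : ℝ)|) ^ q)⁻¹ := by
  rw [← (Equiv.subRight ⌊x⌋).tsum_eq fun k : ℤ => ((2 + |(k : ℝ)|) ^ q)⁻¹]
  exact Summable.tsum_le_tsum (inv_three_add_abs_sub_rpow_le (by linarith) x)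
    (summable_inv_three_add_abs_sub_rpow hq x)
    ((Equiv.subRight ⌊x⌋).summable_iff.2 (summable_inv_two_add_abs_rpow hq))

lemma tsum_inv_two_add_abs_rpow_pos {q : ℝ} (hq : 1 < q) :
    0 < ∑' k : ℤ, ((2 + |(k : ℝ)|) ^ q)⁻¹ :=
  (summable_inv_two_add_abs_rpow hq).tsum_pos (fun _ => by positivity) 0 (by positivity)

theorem summable_and_tsum_sqrt_log_div_rpow_le {a ε L : ℝ} (ha : 0 ≤ a) (hε : 0 < ε)
    (hLε : 1 < L - ε) (x : ℝ) :
    Summable (fun k : ℤ => √(log (3 + a + |(k : ℝ)|)) / (3 + |x - k|) ^ L) ∧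
      ∑' k : ℤ, √(log (3 + a + |(k : ℝ)|)) / (3 + |x - k|) ^ L ≤
        √(log (3 + a + |x|)) * ∑' k : ℤ, ((2 + |(k : ℝ)|) ^ L)⁻¹ +
          ε⁻¹ * ∑' k : ℤ, ((2 + |(k : ℝ)|) ^ (L - ε))⁻¹ := by
  have hL : 1 < L := by linarith
  have hsumL := (summable_inv_three_add_abs_sub_rpow hL x).mul_left √(log (3 + a + |x|))
  have hsumLε := (summable_inv_three_add_abs_sub_rpow hLε x).mul_left ε⁻¹
  have hbound := fun k : ℤ => sqrt_log_div_rpow_le (L := L) ha hε x k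
  have hsum := (hsumL.add hsumLε).of_nonneg_of_le (fun _ => by positivity) hbound
  refine ⟨hsum, (hsum.tsum_le_tsum hbound (hsumL.add hsumLε)).trans ?_⟩
  rw [hsumL.tsum_add hsumLε, tsum_mul_left, tsum_mul_left]
  exact add_le_add
    (mul_le_mul_of_nonneg_left (tsum_inv_three_add_abs_sub_rpow_le hL x) (sqrt_nonneg _))
    (mul_le_mul_of_nonneg_left (tsum_inv_three_add_abs_sub_rpow_le hLε x) (inv_nonneg.2 hε.le))

theorem tsum_sqrt_log_div_rpow_bound (L : ℝ) (hL : 1 < L) :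
    ∃ c : ℝ, 0 < c ∧ ∀ (j : ℤ) (s : ℝ),
      Summable (fun k : ℤ =>
        Real.sqrt (Real.log (3 + |(j : ℝ)| + |(k : ℝ)|)) /
          (3 + |(2 : ℝ) ^ j * s - (k : ℝ)|) ^ L) ∧
      (∑' k : ℤ,
        Real.sqrt (Real.log (3 + |(j : ℝ)| + |(k : ℝ)|)) /
          (3 + |(2 : ℝ) ^ j * s - (k : ℝ)|) ^ L)
        ≤ c * Real.sqrt (Real.log (3 + |(j : ℝ)| + (2 : ℝ) ^ j * |s|)) := by
  obtain ⟨ε, hε, hLε⟩ : ∃ ε : ℝ, 0 < ε ∧ 1 < L - ε := ⟨(L - 1) / 2, by linarith, by linarith⟩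
  have hSL := tsum_inv_two_add_abs_rpow_pos hL
  have hSLε := tsum_inv_two_add_abs_rpow_pos hLε
  refine ⟨_, add_pos hSL (mul_pos (inv_pos.2 hε) hSLε), fun j s => ?_⟩
  obtain ⟨hsum, hle⟩ :=
    summable_and_tsum_sqrt_log_div_rpow_le (abs_nonneg (j : ℝ)) hε hLε (2 ^ j * s)
  rw [abs_mul, abs_of_pos (zpow_pos (two_pos : (0 : ℝ) < 2) j)] at hle
  have hA : 1 ≤ √(log (3 + |(j : ℝ)| + 2 ^ j * |s|)) :=
    one_le_sqrt.2 (by simpa only [add_assoc] using one_le_log_three_add (by positivity))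
  refine ⟨hsum, hle.trans ?_⟩
  nlinarith [mul_pos (inv_pos.2 hε) hSLε]
end

section
/- Let δ ∈ (0,1/2). Then for every p ∈ ℤ one has γ_p^{(δ)} = (1/(2π)) ∫_0^{2π} e^{−i p ξ} (1 − e^{iξ})^{−δ} dξ, where for ξ ∈ (0,2π) the quantity (1 − e^{iξ})^{−δ} denotes the principal-branch complex power exp(−δ · Log(1 − e^{iξ})) (which coincides with the radial boundary limit lim_{r→1⁻} (1 − r e^{iξ})^{−δ}). In particular the Fourier coefficients of the L²([0,2π]) function ξ ↦ (1 − e^{iξ})^{−δ} with negative index vanish. -/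
open scoped Real

/-- The FARIMA coefficients `γ_p^{(δ)}`:
`γ_0 = 1`, `γ_p = δ Γ(p+δ)/(Γ(p+1) Γ(δ+1))` for `p ≥ 1`, and `γ_p = 0` for `p < 0`. -/
noncomputable def gammaCoef (δ : ℝ) (p : ℤ) : ℝ :=
  if p = 0 then 1
  else if 0 < p then δ * Real.Gamma ((p : ℝ) + δ) / (Real.Gamma ((p : ℝ) + 1) * Real.Gamma (δ + 1))
  else 0

/-!
For `r < 1` the binomial series `(1 - z)^(-δ) = ∑ₙ (δ + n - 1 choose n) zⁿ` converges absolutely on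
the circle `|z| = r`, so integrating it termwise against `e^{-ipξ}` shows that the `p`-th Fourier
coefficient of `ξ ↦ (1 - r e^{iξ})^(-δ)` is `(δ + p - 1 choose p) rᵖ` for `p ≥ 0` and `0` for
`p < 0`; by the functional equation of `Γ` this binomial coefficient is `γ_p`. To let `r → 1⁻`,
note `|1 - e^{iξ}| ≤ 2 |1 - r e^{iξ}|` and, by Jordan's inequality,
`|1 - e^{iξ}| ≥ (2/π) min(ξ, 2π - ξ)`; so the integrands are dominated by a multiple of
`ξ^(-δ) + (2π - ξ)^(-δ)`, which is integrable as `δ < 1`, and dominated convergence concludes.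
-/

open Complex MeasureTheory Filter Set intervalIntegral
open scoped Topology ENNReal

theorem Real.Gamma_add_nat_eq_mul_ascPochhammer {x : ℝ} (hx : ∀ k : ℕ, x ≠ -k) (n : ℕ) :
    Real.Gamma (x + n) = Real.Gamma x * (ascPochhammer ℝ n).eval x := by
  induction n with
  | zero => simp
  | succ n ih =>
    have hxn : x + n ≠ 0 := fun h => hx n (by linarith)
    rw [Nat.cast_succ, ← add_assoc, Real.Gamma_add_one hxn, ih, ascPochhammer_succ_eval]
    ring

theorem gammaCoef_natCast {δ : ℝ} (hδ : ∀ k : ℕ, δ ≠ -k) (n : ℕ) :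
    gammaCoef δ n = Ring.choose (δ + n - 1) n := by
  rcases Nat.eq_zero_or_pos n with rfl | hn
  · simp [gammaCoef]
  have hδ0 : δ ≠ 0 := by simpa using hδ 0
  have hΓ : Real.Gamma δ ≠ 0 := Real.Gamma_ne_zero hδ
  have h := Ring.factorial_nsmul_multichoose_eq_ascPochhammer δ n
  rw [Polynomial.ascPochhammer_smeval_eq_eval, nsmul_eq_mul] at h
  rw [gammaCoef, if_neg (by omega), if_pos (by omega), ← Ring.multichoose_eq, Int.cast_natCast,
    add_comm, Real.Gamma_add_nat_eq_mul_ascPochhammer hδ, Real.Gamma_nat_eq_factorial,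
    Real.Gamma_add_one hδ0, ← h]
  field_simp

theorem gammaCoef_eq_choose {δ : ℝ} (hδ : ∀ k : ℕ, δ ≠ -k) (p : ℤ) :
    gammaCoef δ p = if 0 ≤ p then Ring.choose (δ + p.toNat - 1) p.toNat else 0 := by
  split_ifs with hp
  · rw [← gammaCoef_natCast hδ, Int.toNat_of_nonneg hp]
  · rw [gammaCoef, if_neg (by omega), if_neg (by omega)]

theorem Complex.one_sub_cpow_neg_hasFPowerSeriesOnBall_zero (a : ℂ) :
    HasFPowerSeriesOnBall (fun z ↦ (1 - z) ^ (-a))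
      (.ofScalars ℂ fun n ↦ Ring.choose (a + n - 1) n) 0 1 := by
  simpa [cpow_neg] using one_div_one_sub_cpow_hasFPowerSeriesOnBall_zero a

theorem integral_exp_I_mul_int_mul (m : ℤ) :
    ∫ ξ in (0 : ℝ)..2 * π, exp (I * m * ξ) = if m = 0 then 2 * (π : ℂ) else 0 := by
  split_ifs with hm
  · simp [hm]
  have hc : I * m ≠ 0 := mul_ne_zero I_ne_zero (by exact_mod_cast hm)
  have hperiod : exp (I * m * (2 * π : ℝ)) = 1 := by
    rw [← exp_int_mul_two_pi_mul_I m]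
    push_cast
    ring_nf
  rw [integral_exp_mul_complex hc, hperiod]
  simp

theorem norm_exp_neg_I_mul_int_mul (p : ℤ) (ξ : ℝ) : ‖exp (-I * p * ξ)‖ = 1 := by
  rw [show -I * p * ξ = I * (-p * ξ : ℝ) by push_cast; ring, norm_exp_I_mul_ofReal]

theorem norm_ofReal_mul_exp_I_mul {r : ℝ} (hr : 0 ≤ r) (ξ : ℝ) : ‖(r : ℂ) * exp (I * ξ)‖ = r := by
  rw [norm_mul, norm_exp_I_mul_ofReal, mul_one, norm_real, Real.norm_of_nonneg hr]

theorem integral_exp_neg_I_mul_int_mul_mul_pow (p : ℤ) (c : ℂ) (r : ℝ) (n : ℕ) :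
    ∫ ξ in (0 : ℝ)..2 * π, exp (-I * p * ξ) * (c * (r * exp (I * ξ)) ^ n) =
      2 * π * if (n : ℤ) = p then c * r ^ n else 0 := by
  have h (ξ : ℝ) : exp (-I * p * ξ) * (c * (r * exp (I * ξ)) ^ n) =
      c * r ^ n * exp (I * ((n - p : ℤ) : ℂ) * ξ) := by
    rw [show I * ((n - p : ℤ) : ℂ) * ξ = n * (I * ξ) + -I * p * ξ by push_cast; ring,
      exp_add, exp_nat_mul]
    ring
  simp_rw [h, intervalIntegral.integral_const_mul, integral_exp_I_mul_int_mul, sub_eq_zero]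
  split_ifs <;> ring

theorem HasFPowerSeriesOnBall.integral_exp_mul_comp_mul_exp {f : ℂ → ℂ} {a : ℕ → ℂ} {R : ℝ≥0∞}
    (hf : HasFPowerSeriesOnBall f (FormalMultilinearSeries.ofScalars ℂ a) 0 R) {r : ℝ}
    (hr0 : 0 ≤ r) (hr : ENNReal.ofReal r < R) (p : ℤ) :
    ∫ ξ in (0 : ℝ)..2 * π, exp (-I * p * ξ) * f (r * exp (I * ξ)) =
      2 * π * (if 0 ≤ p then a p.toNat else 0) * r ^ p.toNat := by
  have hsummable : Summable fun n => ‖a n‖ * r ^ n := by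
    simpa [FormalMultilinearSeries.ofScalars_norm, hr0] using
      (FormalMultilinearSeries.ofScalars ℂ a).summable_norm_mul_pow (r := r.toNNReal)
        (hr.trans_le hf.r_le)
  have hseries := intervalIntegral.hasSum_integral_of_dominated_convergence
    (fun n _ => ‖a n‖ * r ^ n) (μ := volume) (a := 0) (b := 2 * π)
    (F := fun n ξ => exp (-I * p * ξ) * (a n * (r * exp (I * ξ)) ^ n))
    (f := fun ξ => exp (-I * p * ξ) * f (r * exp (I * ξ)))
    (fun n => (by fun_prop : Continuous _).aestronglyMeasurable)
    (fun n => ae_of_all _ fun ξ _ => by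
      rw [norm_mul, norm_exp_neg_I_mul_int_mul, one_mul, norm_mul, norm_pow,
        norm_ofReal_mul_exp_I_mul hr0])
    (ae_of_all _ fun _ _ => hsummable) intervalIntegrable_const
    (ae_of_all _ fun ξ _ => by
      have hmem : (r : ℂ) * exp (I * ξ) ∈ Metric.eball (0 : ℂ) R := by
        rwa [Metric.mem_eball, edist_zero_right, ← ofReal_norm, norm_ofReal_mul_exp_I_mul hr0]
      simpa [FormalMultilinearSeries.ofScalars_apply_eq, mul_comm] using
        (hf.hasSum hmem).mul_left (exp (-I * p * ξ)))
  simp_rw [integral_exp_neg_I_mul_int_mul_mul_pow] at hseries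
  rw [mul_assoc]
  refine hseries.unique (HasSum.mul_left _ ?_)
  split_ifs with hp
  · have := hasSum_single (f := fun n : ℕ => if (n : ℤ) = p then a n * r ^ n else 0) p.toNat
      (fun n hn => if_neg (by omega))
    rwa [if_pos (Int.toNat_of_nonneg hp)] at this
  · simp [show ∀ n : ℕ, (n : ℤ) ≠ p by omega, hasSum_zero]

theorem one_sub_mem_slitPlane {z : ℂ} (hz : ‖z‖ ≤ 1) (h1 : z ≠ 1) : 1 - z ∈ slitPlane := by
  rw [mem_slitPlane_iff, sub_re, sub_im, one_re, one_im]
  by_contra! h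
  have hre : z.re ≤ 1 := (re_le_norm z).trans hz
  have him : z.im = 0 := by linarith [h.2]
  exact h1 (Complex.ext (by simp; linarith [h.1]) (by simp [him]))

theorem exp_I_mul_ne_one {ξ : ℝ} (hξ : ξ ∈ Ioo 0 (2 * π)) : exp (I * ξ) ≠ 1 := by
  rw [Ne, Complex.exp_eq_one_iff]
  rintro ⟨n, hn⟩
  have hξn : ξ = n * (2 * π) := by
    have := congrArg im hn
    simpa [mul_comm, mul_left_comm, mul_assoc] using this
  obtain ⟨h0, h2π⟩ := hξ
  rw [hξn] at h0 h2π
  have : (0 : ℝ) < n := pos_of_mul_pos_left h0 (by positivity)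
  have : (n : ℝ) < 1 := by nlinarith [Real.pi_pos]
  norm_cast at *
  omega

-- `1 - r ≤ ‖1 - r z‖` absorbs the distance `1 - r` between `r z` and `z`.
theorem norm_one_sub_le_two_mul_norm_one_sub_mul {z : ℂ} (hz : ‖z‖ = 1) {r : ℝ} (hr0 : 0 ≤ r)
    (hr1 : r ≤ 1) : ‖1 - z‖ ≤ 2 * ‖1 - r * z‖ := by
  have hrz : ‖(r : ℂ) * z‖ = r := by simp [hz, abs_of_nonneg hr0]
  have hzrz : ‖(r : ℂ) * z - z‖ = 1 - r := by
    rw [← sub_one_mul, norm_mul, hz, mul_one, ← norm_neg, neg_sub, ← ofReal_one, ← ofReal_sub,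
      norm_real, Real.norm_of_nonneg (by linarith)]
  have h1 := norm_sub_norm_le (1 : ℂ) (r * z)
  rw [norm_one, hrz] at h1
  linarith [norm_sub_le_norm_sub_add_norm_sub 1 (r * z : ℂ) z]

theorem mul_le_norm_one_sub_exp_I_mul {ξ : ℝ} (h0 : 0 ≤ ξ) (hπ : ξ ≤ π) :
    2 / π * ξ ≤ ‖1 - exp (I * ξ)‖ := by
  rw [← norm_neg, neg_sub, norm_exp_I_mul_ofReal_sub_one, Real.norm_eq_abs]
  have := Real.mul_le_sin (x := ξ / 2) (by linarith) (by linarith)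
  rw [abs_of_nonneg (by linarith [(by positivity : 0 ≤ 2 / π * (ξ / 2))])]
  linarith

theorem norm_one_sub_exp_I_mul_two_pi_sub (ξ : ℝ) :
    ‖1 - exp (I * (2 * π - ξ : ℝ))‖ = ‖1 - exp (I * ξ)‖ := by
  rw [← norm_neg, neg_sub, norm_exp_I_mul_ofReal_sub_one, ← norm_neg (1 - _), neg_sub,
    norm_exp_I_mul_ofReal_sub_one, show (2 * π - ξ) / 2 = π - ξ / 2 by ring, Real.sin_pi_sub]

theorem norm_one_sub_mul_exp_I_mul_rpow_neg_le {δ : ℝ} (hδ : 0 ≤ δ) {r : ℝ} (hr0 : 0 ≤ r)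
    (hr1 : r ≤ 1) {ξ : ℝ} (hξ : ξ ∈ Ioo 0 (2 * π)) :
    ‖1 - r * exp (I * ξ)‖ ^ (-δ) ≤ π ^ δ * (ξ ^ (-δ) + (2 * π - ξ) ^ (-δ)) := by
  have hπ := Real.pi_pos
  have hcircle := norm_one_sub_le_two_mul_norm_one_sub_mul (norm_exp_I_mul_ofReal ξ) hr0 hr1
  have of_div_pi_le {η : ℝ} (hη : 0 < η) (h : 2 / π * η ≤ ‖1 - exp (I * ξ)‖) :
      ‖1 - r * exp (I * ξ)‖ ^ (-δ) ≤ π ^ δ * η ^ (-δ) := by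
    have hdiv : η / π ≤ ‖1 - r * exp (I * ξ)‖ := by
      linarith [show η / π = 2 / π * η / 2 by ring]
    calc ‖1 - r * exp (I * ξ)‖ ^ (-δ) ≤ (η / π) ^ (-δ) :=
          Real.rpow_le_rpow_of_nonpos (by positivity) hdiv (by linarith)
      _ = π ^ δ * η ^ (-δ) := by
          rw [Real.div_rpow hη.le hπ.le, Real.rpow_neg hπ.le, div_inv_eq_mul, mul_comm]
  have hleft : 0 ≤ ξ ^ (-δ) := Real.rpow_nonneg hξ.1.le _
  have hright : 0 ≤ (2 * π - ξ) ^ (-δ) := Real.rpow_nonneg (by linarith [hξ.2]) _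
  rcases le_total ξ π with h | h
  · refine (of_div_pi_le hξ.1 (mul_le_norm_one_sub_exp_I_mul hξ.1.le h)).trans ?_
    gcongr
    exact le_add_of_nonneg_right hright
  · have hlow := mul_le_norm_one_sub_exp_I_mul (ξ := 2 * π - ξ) (by linarith [hξ.2]) (by linarith)
    rw [norm_one_sub_exp_I_mul_two_pi_sub] at hlow
    refine (of_div_pi_le (by linarith [hξ.2]) hlow).trans ?_
    gcongr
    exact le_add_of_nonneg_left hleft

theorem tendsto_integral_exp_mul_one_sub_mul_exp_cpow {δ : ℝ} (hδ0 : 0 ≤ δ) (hδ1 : δ < 1)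
    (p : ℤ) :
    Tendsto
      (fun r : ℝ => ∫ ξ in (0 : ℝ)..2 * π, exp (-I * p * ξ) * (1 - r * exp (I * ξ)) ^ (-(δ : ℂ)))
      (𝓝[<] 1)
      (𝓝 (∫ ξ in (0 : ℝ)..2 * π, exp (-I * p * ξ) * (1 - exp (I * ξ)) ^ (-(δ : ℂ)))) := by
  have hIoo : ∀ᵐ ξ : ℝ, ξ ∈ uIoc 0 (2 * π) → ξ ∈ Ioo 0 (2 * π) := by
    filter_upwards [Measure.ae_ne volume (2 * π)] with ξ hne hξ
    rw [uIoc_of_le (by positivity)] at hξ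
    exact ⟨hξ.1, lt_of_le_of_ne hξ.2 hne⟩
  have hbound :
      IntervalIntegrable (fun ξ => π ^ δ * (ξ ^ (-δ) + (2 * π - ξ) ^ (-δ))) volume 0 (2 * π) := by
    have hleft : IntervalIntegrable (fun ξ : ℝ => ξ ^ (-δ)) volume 0 (2 * π) :=
      intervalIntegrable_rpow' (by linarith)
    have hright : IntervalIntegrable (fun ξ : ℝ => (2 * π - ξ) ^ (-δ)) volume 0 (2 * π) := by
      simpa using (hleft.comp_sub_left (2 * π)).symm
    exact (hleft.add hright).const_mul _
  refine tendsto_integral_filter_of_dominated_convergence _ ?_ ?_ hbound ?_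
  · exact Eventually.of_forall fun r => (by fun_prop : Measurable _).aestronglyMeasurable
  · filter_upwards [Ioo_mem_nhdsLT (show (0 : ℝ) < 1 by norm_num)] with r hr
    filter_upwards [hIoo] with ξ hξ hξ'
    rw [norm_mul, norm_exp_neg_I_mul_int_mul, one_mul, ← ofReal_neg, norm_cpow_real]
    exact norm_one_sub_mul_exp_I_mul_rpow_neg_le hδ0 hr.1.le hr.2.le (hξ hξ')
  · filter_upwards [hIoo] with ξ hξ hξ'
    have hslit := one_sub_mem_slitPlane (norm_exp_I_mul_ofReal ξ).le (exp_I_mul_ne_one (hξ hξ'))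
    have hcont : ContinuousAt
        (fun r : ℝ => exp (-I * p * ξ) * (1 - r * exp (I * ξ)) ^ (-(δ : ℂ))) 1 := by
      fun_prop (disch := simpa using hslit)
    simpa using hcont.tendsto.mono_left nhdsWithin_le_nhds

theorem gammaCoef_eq_fourierCoeff (δ : ℝ) (hδ : δ ∈ Set.Ioo (0 : ℝ) (1 / 2)) :
    ∀ p : ℤ,
      ((gammaCoef δ p : ℝ) : ℂ) =
        ((1 / (2 * Real.pi) : ℝ) : ℂ) *
          ∫ ξ in (0 : ℝ)..(2 * Real.pi),
            Complex.exp (-Complex.I * (p : ℂ) * (ξ : ℂ)) *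
              (1 - Complex.exp (Complex.I * (ξ : ℂ))) ^ (-(δ : ℂ)) := by
  intro p
  obtain ⟨hδ0, hδ1⟩ := hδ
  have hδ' : ∀ k : ℕ, δ ≠ -k := fun k => by linarith [k.cast_nonneg (α := ℝ)]
  set c : ℂ := if 0 ≤ p then Ring.choose ((δ : ℂ) + p.toNat - 1) p.toNat else 0
  have hc : ((gammaCoef δ p : ℝ) : ℂ) = c := by
    rw [gammaCoef_eq_choose hδ' p]
    push_cast [apply_ite ofReal, Complex.ofReal_choose]
    rfl
  have hdisk : ∀ᶠ r : ℝ in 𝓝[<] 1,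
      ∫ ξ in (0 : ℝ)..2 * π, exp (-I * p * ξ) * (1 - r * exp (I * ξ)) ^ (-(δ : ℂ)) =
        2 * π * c * r ^ p.toNat := by
    filter_upwards [Ioo_mem_nhdsLT (show (0 : ℝ) < 1 by norm_num)] with r hr
    exact (one_sub_cpow_neg_hasFPowerSeriesOnBall_zero δ).integral_exp_mul_comp_mul_exp hr.1.le
      (by simpa using hr.2) p
  have hlim : Tendsto (fun r : ℝ => 2 * π * c * (r : ℂ) ^ p.toNat) (𝓝[<] 1) (𝓝 (2 * π * c)) := by
    simpa using ((by fun_prop : Continuous fun r : ℝ => 2 * π * c * (r : ℂ) ^ p.toNat).tendsto 1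
      |>.mono_left nhdsWithin_le_nhds)
  have hint := tendsto_nhds_unique
    ((tendsto_integral_exp_mul_one_sub_mul_exp_cpow hδ0.le (by linarith) p).congr' hdisk) hlim
  rw [hint, hc]
  push_cast
  field_simp
end

section
/- Let f : ℝ → ℝ be a Schwartz function and let (a_p)_{p∈ℤ} be a sequence of real numbers which is slowly increasing, i.e. there exist constants κ > 0 and μ > 0 with |a_p| ≤ κ(1+|p|)^μ for all p ∈ ℤ. Define A_0 := 0, A_q := Σ_{p=1}^{q} a_p for q > 0, A_q := −Σ_{p=q+1}^{0} a_p for q < 0, and f̃(y) := ∫_{y−1}^{y} f(v) dv for y ∈ ℝ. Then: (i) f̃ is a Schwartz function; (ii) the sequence (A_q)_{q∈ℤ} is slowly increasing, i.e. there exist κ' > 0, μ' > 0 with |A_q| ≤ κ'(1+|q|)^{μ'} for all q; and (iii) for every t ∈ ℝ the two series below converge absolutely and Σ_{k∈ℤ} a_k ∫_0^t f(v−k) dv = Σ_{q∈ℤ} A_q ( f̃(t−q) − f̃(−q) ). -/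
/-!
If `G` is a primitive of `f`, then `f̃ = G - G(· - 1)` has derivative `f - f(· - 1)`, a Schwartz
function, and `f̃` itself decays as fast as `f` does, so `f̃` is Schwartz. Since
`A_k - A_{k-1} = a_k`, part (iii) is summation by parts: with `g_k = ∫_0^t f(v - k) dv` one has
`g_q - g_{q+1} = f̃(t - q) - f̃(-q)`. Every series converges absolutely because `a` and `A` grow
at most polynomially, while `g` and `q ↦ f̃(t - q) - f̃(-q)` are integrals of `f` over windows of
fixed length moving off to infinity, so they decay faster than any power of `|q|`.
-/

open MeasureTheory
open scoped ContDiff SchwartzMap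

/-- `f̃(y) = ∫_{y-1}^y f(v) dv`. -/
noncomputable def ftilde (f : ℝ → ℝ) (y : ℝ) : ℝ := ∫ v in (y - 1)..y, f v

def SlowlyIncreasing (a : ℤ → ℝ) : Prop :=
  ∃ κ μ : ℝ, 0 < κ ∧ 0 < μ ∧ ∀ p : ℤ, |a p| ≤ κ * (1 + |(p : ℝ)|) ^ μ

def RapidlyDecreasing (v : ℤ → ℝ) : Prop :=
  ∀ N : ℕ, ∃ C : ℝ, ∀ k : ℤ, (1 + |(k : ℝ)|) ^ N * |v k| ≤ C

theorem RapidlyDecreasing.sub {u v : ℤ → ℝ} (hu : RapidlyDecreasing u) (hv : RapidlyDecreasing v) :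
    RapidlyDecreasing (u - v) := by
  intro N
  obtain ⟨C, hC⟩ := hu N
  obtain ⟨D, hD⟩ := hv N
  refine ⟨C + D, fun k => ?_⟩
  calc (1 + |(k : ℝ)|) ^ N * |u k - v k| ≤ (1 + |(k : ℝ)|) ^ N * (|u k| + |v k|) := by
        gcongr; exact abs_sub _ _
    _ ≤ C + D := by linarith [hC k, hD k]

theorem SlowlyIncreasing.summable_abs_mul {u v : ℤ → ℝ} (hu : SlowlyIncreasing u)
    (hv : RapidlyDecreasing v) : Summable fun k => |u k * v k| := by
  obtain ⟨κ, μ, hκ, -, hu⟩ := hu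
  obtain ⟨C, hC⟩ := hv (⌈μ⌉₊ + 2)
  refine Summable.of_norm_bounded_eventually
    ((Real.summable_one_div_int_pow.mpr one_lt_two).mul_left (κ * C)) ?_
  filter_upwards [Filter.eventually_cofinite_ne 0] with k hk
  set w := 1 + |(k : ℝ)|
  have hw : 1 ≤ w := le_add_of_nonneg_right (abs_nonneg _)
  have hk2 : 0 < (k : ℝ) ^ 2 := by positivity
  have hkw : (k : ℝ) ^ 2 ≤ w ^ 2 := by
    rw [← sq_abs]; gcongr; linarith
  have hμ : w ^ μ ≤ w ^ ⌈μ⌉₊ := by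
    rw [← Real.rpow_natCast]; exact Real.rpow_le_rpow_of_exponent_le hw (Nat.le_ceil μ)
  have hdecay : w ^ ⌈μ⌉₊ * |v k| * (k : ℝ) ^ 2 ≤ C :=
    calc w ^ ⌈μ⌉₊ * |v k| * (k : ℝ) ^ 2 ≤ w ^ ⌈μ⌉₊ * |v k| * w ^ 2 := by gcongr
      _ = w ^ (⌈μ⌉₊ + 2) * |v k| := by ring
      _ ≤ C := hC k
  rw [norm_abs_eq_norm, Real.norm_eq_abs, abs_mul, mul_one_div, le_div_iff₀ hk2]
  calc |u k| * |v k| * (k : ℝ) ^ 2 ≤ κ * w ^ ⌈μ⌉₊ * |v k| * (k : ℝ) ^ 2 := by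
        gcongr; exact (hu k).trans (by gcongr)
    _ ≤ κ * C := by rw [mul_assoc κ, mul_assoc κ]; gcongr

theorem norm_sub_le_mul_of_norm_sub_pred_le {G : Type*} [SeminormedAddCommGroup G] {A : ℤ → G}
    {M : ℝ} (m : ℤ) (n : ℕ) (h : ∀ k, m < k → k ≤ m + n → ‖A k - A (k - 1)‖ ≤ M) :
    ‖A (m + n) - A m‖ ≤ n * M := by
  induction n with
  | zero => simp
  | succ n ih =>
    push_cast
    calc ‖A (m + (n + 1)) - A m‖ ≤ ‖A (m + (n + 1)) - A (m + n)‖ + ‖A (m + n) - A m‖ :=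
          norm_sub_le_norm_sub_add_norm_sub _ _ _
      _ ≤ M + n * M := by
          gcongr
          · simpa [← add_assoc] using h (m + n + 1) (by omega) (by push_cast; omega)
          · exact ih fun k h₁ h₂ => h k h₁ (by push_cast; omega)
      _ = (n + 1) * M := by ring

theorem SlowlyIncreasing.of_sub_pred {a A : ℤ → ℝ} (ha : SlowlyIncreasing a) (hA0 : A 0 = 0)
    (hA : ∀ k, A k - A (k - 1) = a k) : SlowlyIncreasing A := by
  obtain ⟨κ, μ, hκ, hμ, ha⟩ := ha
  refine ⟨κ, μ + 1, hκ, by linarith, fun q => ?_⟩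
  have hstep : ∀ k : ℤ, |k| ≤ |q| → ‖A k - A (k - 1)‖ ≤ κ * (1 + |(q : ℝ)|) ^ μ := fun k hk => by
    have hk' : |(k : ℝ)| ≤ |(q : ℝ)| := by exact_mod_cast hk
    rw [hA, Real.norm_eq_abs]
    exact (ha k).trans (by gcongr)
  have hAq : |A q| ≤ |(q : ℝ)| * (κ * (1 + |(q : ℝ)|) ^ μ) := by
    rcases Int.eq_nat_or_neg q with ⟨n, rfl | rfl⟩
    · simpa [hA0] using norm_sub_le_mul_of_norm_sub_pred_le (A := A) 0 n
        fun k h₁ h₂ => hstep k (by rw [Nat.abs_cast, abs_le]; omega)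
    · simpa [hA0] using norm_sub_le_mul_of_norm_sub_pred_le (A := A) (-n) n
        fun k h₁ h₂ => hstep k (by rw [abs_neg, Nat.abs_cast, abs_le]; omega)
  calc |A q| ≤ |(q : ℝ)| * (κ * (1 + |(q : ℝ)|) ^ μ) := hAq
    _ ≤ (1 + |(q : ℝ)|) * (κ * (1 + |(q : ℝ)|) ^ μ) := by gcongr; linarith
    _ = κ * (1 + |(q : ℝ)|) ^ (μ + 1) := by
        rw [Real.rpow_add_one (by positivity)]; ring

theorem tsum_sub_pred_mul_eq_tsum_mul_sub_succ {R : Type*} [Ring R] [TopologicalSpace R]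
    [IsTopologicalAddGroup R] [T2Space R] {A g : ℤ → R}
    (h₁ : Summable fun k => A k * g k) (h₂ : Summable fun k => A k * (g k - g (k + 1))) :
    ∑' k, (A k - A (k - 1)) * g k = ∑' k, A k * (g k - g (k + 1)) := by
  have h₃ : HasSum (fun k => A k * g (k + 1)) (∑' k, A k * g (k + 1)) :=
    ((h₁.sub h₂).congr fun k => by simp [mul_sub]).hasSum
  have h₄ : HasSum (fun k => A (k - 1) * g k) (∑' k, A k * g (k + 1)) := by
    rw [← (Equiv.addRight (1 : ℤ)).hasSum_iff]
    simpa [Function.comp_def] using h₃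
  calc ∑' k, (A k - A (k - 1)) * g k = ∑' k, (A k * g k - A (k - 1) * g k) :=
        tsum_congr fun k => sub_mul _ _ _
    _ = ∑' k, A k * g k - ∑' k, A k * g (k + 1) := (h₁.hasSum.sub h₄).tsum_eq
    _ = ∑' k, (A k * g k - A k * g (k + 1)) := (h₁.hasSum.sub h₃).tsum_eq.symm
    _ = ∑' k, A k * (g k - g (k + 1)) := tsum_congr fun k => (mul_sub _ _ _).symm

namespace SchwartzMap

variable {E : Type*} [NormedAddCommGroup E] [NormedSpace ℝ E]

theorem exists_eq_of_hasDerivAt {F : ℝ → E} (g : 𝓢(ℝ, E)) (hF : ∀ x, HasDerivAt F (g x) x)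
    (hF_decay : ∀ k : ℕ, ∃ C, ∀ x : ℝ, ‖x‖ ^ k * ‖F x‖ ≤ C) : ∃ G : 𝓢(ℝ, E), ⇑G = F := by
  have hderiv : deriv F = g := funext fun x => (hF x).deriv
  have hsmooth : ContDiff ℝ ∞ F :=
    contDiff_infty_iff_deriv.2 ⟨fun x => (hF x).differentiableAt, hderiv ▸ g.smooth ⊤⟩
  refine ⟨⟨F, hsmooth, fun k n => ?_⟩, rfl⟩
  cases n with
  | zero => simpa only [norm_iteratedFDeriv_zero] using hF_decay k
  | succ n =>
    obtain ⟨C, -, hC⟩ := g.decay k n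
    refine ⟨C, fun x => ?_⟩
    rw [norm_iteratedFDeriv_eq_norm_iteratedDeriv, iteratedDeriv_succ', hderiv,
      ← norm_iteratedFDeriv_eq_norm_iteratedDeriv]
    exact hC x

theorem exists_one_add_abs_pow_mul_norm_intervalIntegral_comp_sub_le (f : 𝓢(ℝ, E)) (a b : ℝ)
    (k : ℕ) : ∃ C, ∀ x : ℝ, (1 + |x|) ^ k * ‖∫ v in a..b, f (v - x)‖ ≤ C := by
  obtain ⟨C, hC⟩ : ∃ C, ∀ y : ℝ, (1 + |y|) ^ k * ‖f y‖ ≤ C := ⟨_, fun y => by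
    simpa only [norm_iteratedFDeriv_zero, Real.norm_eq_abs] using
      one_add_le_sup_seminorm_apply (𝕜 := ℝ) (m := (k, 0)) le_rfl le_rfl f y⟩
  set R := max |a| |b|
  refine ⟨(1 + R) ^ k * C * |b - a|, fun x => ?_⟩
  have hbound : ∀ v ∈ Set.uIoc a b, ‖(1 + |x|) ^ k • f (v - x)‖ ≤ (1 + R) ^ k * C := by
    intro v hv
    have hvR : |v| ≤ R := by
      rcases Set.mem_uIcc.1 (Set.uIoc_subset_uIcc hv) with h | h
      · exact abs_le_max_abs_abs h.1 h.2
      · exact (abs_le_max_abs_abs h.1 h.2).trans_eq (max_comm _ _)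
    have hx : 1 + |x| ≤ (1 + R) * (1 + |v - x|) := by
      have := abs_sub_comm x v ▸ abs_sub_abs_le_abs_sub x v
      nlinarith [mul_nonneg ((abs_nonneg v).trans hvR) (abs_nonneg (v - x))]
    rw [norm_smul, Real.norm_of_nonneg (by positivity)]
    calc (1 + |x|) ^ k * ‖f (v - x)‖ ≤ ((1 + R) * (1 + |v - x|)) ^ k * ‖f (v - x)‖ := by gcongr
      _ = (1 + R) ^ k * ((1 + |v - x|) ^ k * ‖f (v - x)‖) := by rw [mul_pow]; ring
      _ ≤ (1 + R) ^ k * C := by gcongr; exact hC _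
  have := intervalIntegral.norm_integral_le_of_norm_le_const hbound
  rwa [intervalIntegral.integral_smul, norm_smul, Real.norm_of_nonneg (by positivity)] at this

theorem rapidlyDecreasing_intervalIntegral_comp_sub (f : 𝓢(ℝ, ℝ)) (a b : ℝ) :
    RapidlyDecreasing fun k : ℤ => ∫ v in a..b, f (v - k) := fun N =>
  let ⟨C, hC⟩ := f.exists_one_add_abs_pow_mul_norm_intervalIntegral_comp_sub_le a b N
  ⟨C, fun k => hC k⟩

end SchwartzMap

theorem ftilde_sub_eq_intervalIntegral_comp_sub (f : ℝ → ℝ) (c y : ℝ) :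
    ftilde f (c - y) = ∫ v in (c - 1)..c, f (v - y) := by
  rw [intervalIntegral.integral_comp_sub_right, ftilde, sub_right_comm]

theorem hasDerivAt_ftilde {f : ℝ → ℝ} (hf : Continuous f) (y : ℝ) :
    HasDerivAt (ftilde f) (f y - f (y - 1)) y := by
  have hG : ∀ x, HasDerivAt (fun u => ∫ v in (0 : ℝ)..u, f v) (f x) x := fun x =>
    (hf.integral_hasStrictDerivAt 0 x).hasDerivAt
  have hsplit : ftilde f = fun u => (∫ v in (0 : ℝ)..u, f v) - ∫ v in (0 : ℝ)..(u - 1), f v :=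
    funext fun u => (intervalIntegral.integral_interval_sub_left
      (hf.intervalIntegrable _ _) (hf.intervalIntegrable _ _)).symm
  rw [hsplit]
  exact (hG y).sub ((hG (y - 1)).comp_sub_const y 1)

theorem exists_schwartzMap_eq_ftilde (f : 𝓢(ℝ, ℝ)) : ∃ F : 𝓢(ℝ, ℝ), ∀ y, F y = ftilde f y := by
  have hdecay (k : ℕ) : ∃ C, ∀ y : ℝ, ‖y‖ ^ k * ‖ftilde f y‖ ≤ C := by
    obtain ⟨C, hC⟩ := f.exists_one_add_abs_pow_mul_norm_intervalIntegral_comp_sub_le (-1) 0 k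
    refine ⟨C, fun y => le_trans ?_ (hC (-y))⟩
    have hy : ftilde f y = ∫ v in (-1 : ℝ)..0, f (v - -y) := by
      simpa using ftilde_sub_eq_intervalIntegral_comp_sub f 0 (-y)
    rw [abs_neg, hy]
    gcongr
    rw [Real.norm_eq_abs]
    linarith
  obtain ⟨F, hF⟩ := SchwartzMap.exists_eq_of_hasDerivAt (F := ftilde f)
    (f - f.compSubConstCLM ℝ 1) (fun y => by simpa using hasDerivAt_ftilde f.continuous y) hdecay
  exact ⟨F, congrFun hF⟩

theorem ftilde_sub_sub_ftilde_neg {f : ℝ → ℝ} (hf : Continuous f) (t q : ℝ) :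
    ftilde f (t - q) - ftilde f (-q) =
      (∫ v in (0 : ℝ)..t, f (v - q)) - ∫ v in (0 : ℝ)..t, f (v - (q + 1)) := by
  have hint : ∀ a b : ℝ, IntervalIntegrable (fun v => f (v - q)) volume a b :=
    fun a b => (hf.comp (continuous_sub_right q)).intervalIntegrable a b
  have hshift : (∫ v in (0 : ℝ)..t, f (v - (q + 1))) = ∫ v in (-1 : ℝ)..(t - 1), f (v - q) := by
    rw [intervalIntegral.integral_comp_sub_right, intervalIntegral.integral_comp_sub_right (f := f)]
    congr 1 <;> ring
  rw [← zero_sub q, ftilde_sub_eq_intervalIntegral_comp_sub,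
    ftilde_sub_eq_intervalIntegral_comp_sub, hshift, zero_sub]
  have h₁ := intervalIntegral.integral_add_adjacent_intervals (hint (-1) (t - 1)) (hint (t - 1) t)
  have h₂ := intervalIntegral.integral_add_adjacent_intervals (hint (-1) 0) (hint 0 t)
  linarith

theorem rapidlyDecreasing_ftilde_sub_sub_ftilde_neg (f : 𝓢(ℝ, ℝ)) (t : ℝ) :
    RapidlyDecreasing fun q : ℤ => ftilde f (t - q) - ftilde f (-q) := by
  convert (f.rapidlyDecreasing_intervalIntegral_comp_sub (t - 1) t).sub
    (f.rapidlyDecreasing_intervalIntegral_comp_sub (-1) 0) using 1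
  funext q
  rw [Pi.sub_apply, ftilde_sub_eq_intervalIntegral_comp_sub, ← zero_sub (q : ℝ),
    ftilde_sub_eq_intervalIntegral_comp_sub, zero_sub]

theorem abel_transform_schwartz (f : SchwartzMap ℝ ℝ) (a : ℤ → ℝ)
    (κ μ0 : ℝ) (hκ : 0 < κ) (hμ0 : 0 < μ0)
    (ha : ∀ p : ℤ, |a p| ≤ κ * (1 + |(p : ℝ)|) ^ μ0)
    (A : ℤ → ℝ) (hA0 : A 0 = 0)
    (hApos : ∀ q : ℤ, 0 < q → A q = A (q - 1) + a q)
    (hAneg : ∀ q : ℤ, q < 0 → A q = A (q + 1) - a (q + 1)) :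
    (∃ F : SchwartzMap ℝ ℝ, ∀ y : ℝ, F y = ftilde (fun v => f v) y) ∧
    (∃ κ' μ' : ℝ, 0 < κ' ∧ 0 < μ' ∧ ∀ q : ℤ, |A q| ≤ κ' * (1 + |(q : ℝ)|) ^ μ') ∧
    (∀ t : ℝ,
      Summable (fun k : ℤ => |a k * ∫ v in (0 : ℝ)..t, f (v - (k : ℝ))|) ∧
      Summable (fun q : ℤ =>
        |A q * (ftilde (fun v => f v) (t - (q : ℝ)) - ftilde (fun v => f v) (-(q : ℝ)))|) ∧
      (∑' k : ℤ, a k * ∫ v in (0 : ℝ)..t, f (v - (k : ℝ))) =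
        ∑' q : ℤ,
          A q * (ftilde (fun v => f v) (t - (q : ℝ)) - ftilde (fun v => f v) (-(q : ℝ)))) := by
  have hA : ∀ k, A k - A (k - 1) = a k := fun k => by
    rcases lt_or_ge 0 k with hk | hk
    · linarith [hApos k hk]
    · linarith [sub_add_cancel k 1 ▸ hAneg (k - 1) (by omega)]
  have ha_slow : SlowlyIncreasing a := ⟨κ, μ0, hκ, hμ0, ha⟩
  have hA_slow := ha_slow.of_sub_pred hA0 hA
  refine ⟨exists_schwartzMap_eq_ftilde f, hA_slow, fun t => ?_⟩
  set g : ℤ → ℝ := fun k => ∫ v in (0 : ℝ)..t, f (v - k)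
  have hg : RapidlyDecreasing g := f.rapidlyDecreasing_intervalIntegral_comp_sub 0 t
  have hdiff_eq : ∀ q : ℤ, ftilde f (t - q) - ftilde f (-q) = g q - g (q + 1) := fun q => by
    simp only [ftilde_sub_sub_ftilde_neg f.continuous, g, Int.cast_add, Int.cast_one]
  have hdiff := rapidlyDecreasing_ftilde_sub_sub_ftilde_neg f t
  refine ⟨ha_slow.summable_abs_mul hg, hA_slow.summable_abs_mul hdiff, ?_⟩
  simp only [← hA, hdiff_eq]
  exact tsum_sub_pred_mul_eq_tsum_mul_sub_succ (hA_slow.summable_abs_mul hg).of_abs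
    (by simpa only [hdiff_eq] using (hA_slow.summable_abs_mul hdiff).of_abs)
end

section
/- Let d ≥ 1 be an integer and let f_1,…,f_d : ℝ → ℝ be measurable functions which are bounded and Lebesgue integrable. Then for all j = (j_1,…,j_d) ∈ ℤ^d and k = (k_1,…,k_d) ∈ ℤ^d, and any index n ∈ {1,…,d} with j_n = max_{ℓ∈{1,…,d}} j_ℓ, one has ( ∫_ℝ ∏_{ℓ=1}^{d} f_ℓ(2^{j_ℓ}s − k_ℓ) ds )² ≤ ‖f_n‖_{L¹(ℝ)} · 2^{−j_n} · ∫_ℝ |f_n(2^{j_n}s − k_n)| ∏_{ℓ≠n} |f_ℓ(2^{j_ℓ}s − k_ℓ)|² ds. -/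
/-!
Write the integrand as `g n * b`, where `g ℓ s = f ℓ (2 ^ j ℓ * s - k ℓ)` and `b = ∏_{ℓ ≠ n} g ℓ`
is bounded. Cauchy–Schwarz applied to `√|g n|` and `√|g n| * |b|` gives
`(∫ g n * b) ^ 2 ≤ (∫ |g n|) * ∫ |g n| * b ^ 2`, and the affine substitution
`x = 2 ^ j n * s - k n` turns `∫ |g n|` into `2 ^ (-j n) * ‖f n‖₁`.
-/

open MeasureTheory

section CauchySchwarz

variable {α : Type*} [MeasurableSpace α] {μ : Measure α}

theorem sq_integral_mul_le_of_nonneg {u w : α → ℝ} (hu₀ : 0 ≤ᵐ[μ] u) (hw₀ : 0 ≤ᵐ[μ] w)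
    (hu : MemLp u 2 μ) (hw : MemLp w 2 μ) :
    (∫ x, u x * w x ∂μ) ^ 2 ≤ (∫ x, u x ^ 2 ∂μ) * ∫ x, w x ^ 2 ∂μ := by
  have holder := integral_mul_le_Lp_mul_Lq_of_nonneg Real.HolderConjugate.two_two hu₀ hw₀
    (by simpa using hu) (by simpa using hw)
  simp only [Real.rpow_two, ← Real.sqrt_eq_rpow] at holder
  have hnonneg : 0 ≤ ∫ x, u x * w x ∂μ :=
    integral_nonneg_of_ae (by filter_upwards [hu₀, hw₀] with x hux hwx using mul_nonneg hux hwx)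
  calc (∫ x, u x * w x ∂μ) ^ 2
      ≤ (√(∫ x, u x ^ 2 ∂μ) * √(∫ x, w x ^ 2 ∂μ)) ^ 2 := pow_le_pow_left₀ hnonneg holder 2
    _ = (∫ x, u x ^ 2 ∂μ) * ∫ x, w x ^ 2 ∂μ := by
      rw [mul_pow, Real.sq_sqrt (integral_nonneg fun _ => sq_nonneg _),
        Real.sq_sqrt (integral_nonneg fun _ => sq_nonneg _)]

theorem sq_integral_mul_le_integral_abs_mul_integral_abs_mul_sq {a b : α → ℝ}
    (ha : Integrable a μ) (hb : AEStronglyMeasurable b μ)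
    (hab : Integrable (fun x => |a x| * b x ^ 2) μ) :
    (∫ x, a x * b x ∂μ) ^ 2 ≤ (∫ x, |a x| ∂μ) * ∫ x, |a x| * b x ^ 2 ∂μ := by
  set u : α → ℝ := fun x => √|a x|
  set w : α → ℝ := fun x => √|a x| * |b x|
  have hu_sq : ∀ x, u x ^ 2 = |a x| := fun x => Real.sq_sqrt (abs_nonneg _)
  have hw_sq : ∀ x, w x ^ 2 = |a x| * b x ^ 2 := fun x => by
    rw [mul_pow, hu_sq, sq_abs]
  have huw : ∀ x, u x * w x = |a x * b x| := fun x => by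
    rw [← mul_assoc, ← sq, hu_sq, abs_mul]
  have hu_meas : AEStronglyMeasurable u μ :=
    Real.continuous_sqrt.comp_aestronglyMeasurable (continuous_abs.comp_aestronglyMeasurable ha.1)
  have hu : MemLp u 2 μ :=
    (memLp_two_iff_integrable_sq hu_meas).2 (by simpa only [hu_sq] using ha.abs)
  have hw : MemLp w 2 μ :=
    (memLp_two_iff_integrable_sq (f := w)
      (hu_meas.mul (continuous_abs.comp_aestronglyMeasurable hb))).2
      (by simpa only [hw_sq] using hab)
  calc (∫ x, a x * b x ∂μ) ^ 2
      = |∫ x, a x * b x ∂μ| ^ 2 := (sq_abs _).symm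
    _ ≤ (∫ x, u x * w x ∂μ) ^ 2 := by
      simp only [huw]
      exact pow_le_pow_left₀ (abs_nonneg _) abs_integral_le_integral_abs 2
    _ ≤ (∫ x, u x ^ 2 ∂μ) * ∫ x, w x ^ 2 ∂μ :=
      sq_integral_mul_le_of_nonneg (.of_forall fun _ => Real.sqrt_nonneg _)
        (.of_forall fun _ => mul_nonneg (Real.sqrt_nonneg _) (abs_nonneg _)) hu hw
    _ = (∫ x, |a x| ∂μ) * ∫ x, |a x| * b x ^ 2 ∂μ := by simp only [hu_sq, hw_sq]

end CauchySchwarz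

section AffineChangeOfVariables

variable {E : Type*} [NormedAddCommGroup E] {c : ℝ}

theorem MeasureTheory.Integrable.comp_mul_left_sub {F : ℝ → E} (hF : Integrable F) (hc : c ≠ 0)
    (k : ℝ) :
    Integrable fun s => F (c * s - k) :=
  (hF.comp_sub_right k).comp_mul_left' hc

theorem integral_comp_mul_left_sub_of_pos [NormedSpace ℝ E] (F : ℝ → E) (hc : 0 < c) (k : ℝ) :
    ∫ s, F (c * s - k) = c⁻¹ • ∫ x, F x := by
  rw [Measure.integral_comp_mul_left (fun x => F (x - k)), integral_sub_right_eq_self,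
    abs_of_pos (inv_pos.2 hc)]

end AffineChangeOfVariables

theorem sq_integral_prod_le_general (d : ℕ) (f : Fin d → ℝ → ℝ)
    (hbdd : ∀ ℓ, ∃ C : ℝ, ∀ x : ℝ, |f ℓ x| ≤ C)
    (hint : ∀ ℓ, Integrable (f ℓ)) :
    ∀ (j k : Fin d → ℤ) (n : Fin d), (∀ ℓ, j ℓ ≤ j n) →
      (∫ s : ℝ, ∏ ℓ, f ℓ ((2 : ℝ) ^ (j ℓ) * s - (k ℓ : ℝ))) ^ 2 ≤
        (∫ x : ℝ, |f n x|) * (2 : ℝ) ^ (-(j n)) *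
          ∫ s : ℝ, |f n ((2 : ℝ) ^ (j n) * s - (k n : ℝ))| *
            ∏ ℓ ∈ Finset.univ.erase n, |f ℓ ((2 : ℝ) ^ (j ℓ) * s - (k ℓ : ℝ))| ^ 2 := by
  intro j k n _
  set g : Fin d → ℝ → ℝ := fun ℓ s => f ℓ ((2 : ℝ) ^ (j ℓ) * s - (k ℓ : ℝ))
  set b : ℝ → ℝ := fun s => ∏ ℓ ∈ Finset.univ.erase n, g ℓ s
  choose C hC using hbdd
  have hg : ∀ ℓ, Integrable (g ℓ) := fun ℓ =>
    (hint ℓ).comp_mul_left_sub (zpow_pos two_pos _).ne' _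
  have hb : AEStronglyMeasurable b :=
    Finset.aestronglyMeasurable_fun_prod _ fun ℓ _ => (hg ℓ).1
  have hb_bdd : ∀ s, ‖b s ^ 2‖ ≤ (∏ ℓ ∈ Finset.univ.erase n, C ℓ) ^ 2 := fun s => by
    rw [norm_pow, Real.norm_eq_abs, Finset.abs_prod]
    exact pow_le_pow_left₀ (by positivity)
      (Finset.prod_le_prod (fun ℓ _ => abs_nonneg _) fun ℓ _ => hC ℓ _) 2
  have hgb : Integrable fun s => |g n s| * b s ^ 2 :=
    (hg n).abs.bdd_mul (hb.pow 2) (.of_forall hb_bdd) |>.congr (.of_forall fun _ => mul_comm _ _)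
  have h_prod : ∀ s, ∏ ℓ, g ℓ s = g n s * b s := fun s =>
    (Finset.mul_prod_erase _ (g · s) (Finset.mem_univ n)).symm
  have h_abs : ∫ s, |g n s| = (2 : ℝ) ^ (-(j n)) * ∫ x, |f n x| := by
    rw [integral_comp_mul_left_sub_of_pos (fun x => |f n x|) (zpow_pos two_pos _), smul_eq_mul,
      zpow_neg]
  have h_sq : ∀ s, b s ^ 2 = ∏ ℓ ∈ Finset.univ.erase n, |g ℓ s| ^ 2 := fun s => by
    simp only [b, ← Finset.prod_pow, sq_abs]
  calc (∫ s, ∏ ℓ, g ℓ s) ^ 2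
      = (∫ s, g n s * b s) ^ 2 := by simp only [h_prod]
    _ ≤ (∫ s, |g n s|) * ∫ s, |g n s| * b s ^ 2 :=
      sq_integral_mul_le_integral_abs_mul_integral_abs_mul_sq (hg n) hb hgb
    _ = _ := by simp only [h_abs, h_sq]; ring

theorem sq_integral_prod_le (d : ℕ) (hd : 1 ≤ d) (f : Fin d → ℝ → ℝ)
    (hmeas : ∀ ℓ, Measurable (f ℓ))
    (hbdd : ∀ ℓ, ∃ C : ℝ, ∀ x : ℝ, |f ℓ x| ≤ C)
    (hint : ∀ ℓ, Integrable (f ℓ)) :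
    ∀ (j k : Fin d → ℤ) (n : Fin d), (∀ ℓ, j ℓ ≤ j n) →
      (∫ s : ℝ, ∏ ℓ, f ℓ ((2 : ℝ) ^ (j ℓ) * s - (k ℓ : ℝ))) ^ 2 ≤
        (∫ x : ℝ, |f n x|) * (2 : ℝ) ^ (-(j n)) *
          ∫ s : ℝ, |f n ((2 : ℝ) ^ (j n) * s - (k n : ℝ))| *
            ∏ ℓ ∈ Finset.univ.erase n, |f ℓ ((2 : ℝ) ^ (j ℓ) * s - (k ℓ : ℝ))| ^ 2 :=
  sq_integral_prod_le_general d f hbdd hint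
end
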